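/- arXiv:2511.23275 — 2 statements merged into one kernel-verified Lean document; each statement's English description precedes it below -/
import Mathlib

section
/- Suppose Assumption A2 holds and p_θ is an exponential family with natural parameter η(θ) = θ, with the standing admissibility conditions (each ΔT_{i,j} := T_i ∘ M_j − T_i and ΔB_j := B ∘ M_j − B in L²(q0)). Let E ⊆ Θ be open and bounded. Then L̂_n(θ) → L(θ) almost surely as n → ∞, for every θ ∈ E. -/
/-!
Write `ℓ x x' = θ ⬝ᵥ (T x' - T x) + (B x' - B x)` for the model log-ratio. The empirical loss is
the empirical mean of the per-sample LRM loss whose target log-ratios are those of `q̂_α`; it splits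
into the empirical mean of the population integrand, which converges by the strong law of large
numbers, and an error term `eₙ`. The strong law applied to indicators gives `q̂_α → q0` pointwise
almost surely, so `eₙ → 0` at every sample point, and the empirical mean of `eₙ` then tends to `0`
as soon as the empirical mass of `|eₙ|` outside finite sets is uniformly small. For finite `𝒳`
this is trivial; under A2(ii) the growth bounds give `|eₙ| ≤ C φ` with
`φ x = avg_{x' ∈ M x} |ℓ x x'| (1 + ‖x‖^γ)`, which is `q0`-integrable because `ℓ ∈ L²(q0)` and
`(1 + ‖x‖^γ)²` is dominated by `exp (c ‖x‖)`, and the strong law for `φ` controls the tails.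
-/

open MeasureTheory Filter Topology ProbabilityTheory Matrix

section EmpiricalMean

variable {𝒳 : Type*}

noncomputable def empiricalMean (x : ℕ → 𝒳) (n : ℕ) (f : 𝒳 → ℝ) : ℝ :=
  1 / (n : ℝ) * ∑ i ∈ Finset.range n, f (x i)

def EmpiricalUnifIntegrable [DecidableEq 𝒳] (x : ℕ → 𝒳) (f : ℕ → 𝒳 → ℝ) : Prop :=
  ∀ ε > 0, ∃ F : Finset 𝒳, ∀ᶠ n in atTop,
    empiricalMean x n (fun z => if z ∈ F then 0 else |f n z|) ≤ ε

variable (x : ℕ → 𝒳) (n : ℕ)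

theorem empiricalMean_add (f g : 𝒳 → ℝ) :
    empiricalMean x n (fun y => f y + g y) = empiricalMean x n f + empiricalMean x n g := by
  simp only [empiricalMean, Finset.sum_add_distrib, mul_add]

theorem empiricalMean_const_mul (c : ℝ) (f : 𝒳 → ℝ) :
    empiricalMean x n (fun y => c * f y) = c * empiricalMean x n f := by
  simp only [empiricalMean, ← Finset.mul_sum]
  ring

theorem empiricalMean_le_empiricalMean {f g : 𝒳 → ℝ} (h : ∀ y, f y ≤ g y) :
    empiricalMean x n f ≤ empiricalMean x n g := by
  unfold empiricalMean
  gcongr with i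
  exact h _

theorem abs_empiricalMean_le (f : 𝒳 → ℝ) :
    |empiricalMean x n f| ≤ empiricalMean x n (fun y => |f y|) := by
  simp only [empiricalMean, abs_mul, one_div, abs_inv, Nat.abs_cast]
  gcongr
  exact Finset.abs_sum_le_sum_abs _ _

theorem empiricalMean_eq_sum_add_tail [DecidableEq 𝒳] (F : Finset 𝒳) (f : 𝒳 → ℝ) :
    empiricalMean x n f =
      ∑ y ∈ F, f y * empiricalMean x n (fun z => if z = y then 1 else 0) +
        empiricalMean x n (fun z => if z ∈ F then 0 else f z) := by
  have hsplit : ∀ z, f z = ∑ y ∈ F, f y * (if z = y then 1 else 0) +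
      (if z ∈ F then 0 else f z) := fun z => by
    by_cases hz : z ∈ F <;> simp [hz]
  conv_lhs => rw [funext hsplit]
  rw [empiricalMean_add]
  simp only [empiricalMean, Finset.mul_sum]
  rw [Finset.sum_comm]
  simp only [mul_left_comm]

variable [DecidableEq 𝒳] {x}

theorem empiricalUnifIntegrable_of_finite [Finite 𝒳] {f : ℕ → 𝒳 → ℝ} :
    EmpiricalUnifIntegrable x f := fun ε hε => by
  have := Fintype.ofFinite 𝒳
  exact ⟨Finset.univ, Eventually.of_forall fun n => by simp [empiricalMean, hε.le]⟩

theorem empiricalUnifIntegrable_of_dominated {q φ : 𝒳 → ℝ} {f : ℕ → 𝒳 → ℝ} {C : ℝ}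
    (hfreq : ∀ y, Tendsto (fun n => empiricalMean x n (fun z => if z = y then 1 else 0))
      atTop (𝓝 (q y)))
    (hφ : Tendsto (fun n => empiricalMean x n φ) atTop (𝓝 (∑' y, q y * φ y)))
    (hqφ : Summable fun y => q y * φ y)
    (hdom : ∀ᶠ n in atTop, ∀ y, |f n y| ≤ C * φ y) :
    EmpiricalUnifIntegrable x f := by
  intro ε hε
  have hsum_tail : Tendsto (fun F : Finset 𝒳 => C * (∑' y, q y * φ y - ∑ y ∈ F, φ y * q y))
      atTop (𝓝 0) := by
    have := ((tendsto_const_nhds (x := ∑' y, q y * φ y)).sub hqφ.hasSum).const_mul C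
    rw [sub_self, mul_zero] at this
    exact this.congr fun F => by simp only [mul_comm (q _)]
  obtain ⟨F, hF⟩ := (hsum_tail.eventually (gt_mem_nhds hε)).exists
  have hφ_tail : Tendsto (fun n => C * empiricalMean x n (fun z => if z ∈ F then 0 else φ z))
      atTop (𝓝 (C * (∑' y, q y * φ y - ∑ y ∈ F, φ y * q y))) := by
    refine ((hφ.sub (tendsto_finsetSum F fun y _ => (hfreq y).const_mul (φ y))).const_mul C).congr
      fun n => ?_
    rw [empiricalMean_eq_sum_add_tail x n F φ]
    ring
  refine ⟨F, ?_⟩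
  filter_upwards [hdom, hφ_tail.eventually (gt_mem_nhds hF)] with n hdom_n hφ_n
  rw [← empiricalMean_const_mul] at hφ_n
  refine (empiricalMean_le_empiricalMean x n fun z => ?_).trans hφ_n.le
  split_ifs
  · simp
  · exact hdom_n z

theorem tendsto_empiricalMean_of_tendsto_zero {q : 𝒳 → ℝ} {f : ℕ → 𝒳 → ℝ}
    (hfreq : ∀ y, Tendsto (fun n => empiricalMean x n (fun z => if z = y then 1 else 0))
      atTop (𝓝 (q y)))
    (hf : ∀ i, Tendsto (fun n => f n (x i)) atTop (𝓝 0)) (hUI : EmpiricalUnifIntegrable x f) :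
    Tendsto (fun n => empiricalMean x n (f n)) atTop (𝓝 0) := by
  rw [Metric.tendsto_nhds]
  intro ε hε
  obtain ⟨F, hF⟩ := hUI (ε / 2) (half_pos hε)
  have hhead : Tendsto (fun n => ∑ y ∈ F, f n y *
      empiricalMean x n (fun z => if z = y then 1 else 0)) atTop (𝓝 0) := by
    rw [← Finset.sum_const_zero (s := F)]
    refine tendsto_finsetSum F fun y _ => ?_
    by_cases hy : ∃ i, x i = y
    · obtain ⟨i, rfl⟩ := hy
      simpa using (hf i).mul (hfreq (x i))
    · push Not at hy
      simp [empiricalMean, hy]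
  filter_upwards [hF, hhead.eventually (Metric.ball_mem_nhds 0 (half_pos hε))]
    with n htail_n hhead_n
  rw [Real.dist_eq, sub_zero] at hhead_n
  rw [Real.dist_eq, sub_zero, empiricalMean_eq_sum_add_tail x n F]
  have htail_abs : |empiricalMean x n (fun z => if z ∈ F then 0 else f n z)| ≤ ε / 2 := by
    refine (abs_empiricalMean_le x n _).trans (le_of_eq_of_le ?_ htail_n)
    simp only [apply_ite abs, abs_zero]
  calc _ ≤ _ := abs_add_le _ _
    _ < ε / 2 + ε / 2 := add_lt_add_of_lt_of_le hhead_n htail_abs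
    _ = ε := add_halves ε

end EmpiricalMean

theorem tendsto_add_div_natCast_add {c : ℕ → ℝ} {p : ℝ}
    (h : Tendsto (fun n : ℕ => 1 / (n : ℝ) * c n) atTop (𝓝 p)) (a b : ℝ) :
    Tendsto (fun n : ℕ => (c n + a) / ((n : ℝ) + b)) atTop (𝓝 p) := by
  have hnum := h.add (tendsto_one_div_atTop_nhds_zero_nat.const_mul a)
  have hden := (tendsto_const_nhds (x := (1 : ℝ))).add
    (tendsto_one_div_atTop_nhds_zero_nat.const_mul b)
  simp only [mul_zero, add_zero] at hnum hden
  refine (div_one p ▸ hnum.div hden one_ne_zero).congr' ?_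
  filter_upwards [eventually_ne_atTop 0] with n hn
  show (1 / (n : ℝ) * c n + a * (1 / (n : ℝ))) / (1 + b * (1 / (n : ℝ))) = _
  field_simp

section Matching

variable {𝒳 : Type*} (M : 𝒳 → Finset 𝒳)

noncomputable def matchAvg (w : 𝒳 → 𝒳 → ℝ) (x : 𝒳) : ℝ :=
  1 / ((M x).card : ℝ) * ∑ x' ∈ M x, w x x'

def MatchL2 (q : 𝒳 → ℝ) (u : 𝒳 → 𝒳 → ℝ) : Prop :=
  Summable fun x => q x * matchAvg M (fun x x' => u x x' ^ 2) x

/-- `ℓ x x'` is the model log-ratio `log (p x' / p x)`, `r x x'` the target one. -/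
noncomputable def lrmLoss (ℓ r : 𝒳 → 𝒳 → ℝ) : 𝒳 → ℝ :=
  matchAvg M fun x x' => ℓ x x' ^ 2 - 2 * ℓ x x' * r x x'

variable {M}

theorem matchAvg_mono {w w' : 𝒳 → 𝒳 → ℝ} {x : 𝒳} (h : ∀ x' ∈ M x, w x x' ≤ w' x x') :
    matchAvg M w x ≤ matchAvg M w' x := by
  unfold matchAvg
  gcongr with x' hx'
  exact h x' hx'

theorem matchAvg_nonneg {w : 𝒳 → 𝒳 → ℝ} {x : 𝒳} (h : ∀ x' ∈ M x, 0 ≤ w x x') :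
    0 ≤ matchAvg M w x :=
  mul_nonneg (by positivity) (Finset.sum_nonneg h)

theorem abs_matchAvg_le (w : 𝒳 → 𝒳 → ℝ) (x : 𝒳) :
    |matchAvg M w x| ≤ matchAvg M (fun x x' => |w x x'|) x := by
  simp only [matchAvg, abs_mul, one_div, abs_inv, Nat.abs_cast]
  gcongr
  exact Finset.abs_sum_le_sum_abs _ _

theorem matchAvg_le_sum {w : 𝒳 → 𝒳 → ℝ} {x : 𝒳} (hw : ∀ x' ∈ M x, 0 ≤ w x x') :
    matchAvg M w x ≤ ∑ x' ∈ M x, w x x' := by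
  refine mul_le_of_le_one_left (Finset.sum_nonneg hw) ?_
  rcases Nat.eq_zero_or_pos (M x).card with h | h
  · simp [h]
  · exact (div_le_one (by exact_mod_cast h)).2 (by exact_mod_cast h)

theorem matchAvg_const_le {c : 𝒳 → ℝ} {x : 𝒳} (hc : 0 ≤ c x) :
    matchAvg M (fun x _ => c x) x ≤ c x := by
  rcases Nat.eq_zero_or_pos (M x).card with h | h
  · simp [matchAvg, h, hc]
  · rw [matchAvg, Finset.sum_const, nsmul_eq_mul]
    field_simp
    rfl

theorem tendsto_matchAvg {ι : Type*} {l : Filter ι} {w : ι → 𝒳 → 𝒳 → ℝ}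
    {w' : 𝒳 → 𝒳 → ℝ} {x : 𝒳} (h : ∀ x' ∈ M x, Tendsto (fun i => w i x x') l (𝓝 (w' x x'))) :
    Tendsto (fun i => matchAvg M (w i) x) l (𝓝 (matchAvg M w' x)) :=
  (tendsto_finsetSum _ h).const_mul _

variable {q : 𝒳 → ℝ}

namespace MatchL2

theorem of_summable_sum (hq : ∀ x, 0 ≤ q x) {u : 𝒳 → 𝒳 → ℝ}
    (h : Summable fun x => q x * ∑ x' ∈ M x, u x x' ^ 2) : MatchL2 M q u :=
  h.of_nonneg_of_le (fun x => mul_nonneg (hq x) (matchAvg_nonneg fun _ _ => sq_nonneg _))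
    fun x => mul_le_mul_of_nonneg_left (matchAvg_le_sum fun _ _ => sq_nonneg _) (hq x)

theorem of_summable_sq (hq : ∀ x, 0 ≤ q x) {w : 𝒳 → ℝ}
    (h : Summable fun x => q x * w x ^ 2) : MatchL2 M q fun x _ => w x :=
  h.of_nonneg_of_le (fun x => mul_nonneg (hq x) (matchAvg_nonneg fun _ _ => sq_nonneg _))
    fun x => mul_le_mul_of_nonneg_left (matchAvg_const_le (sq_nonneg _)) (hq x)

theorem summable_of_abs_le (hq : ∀ x, 0 ≤ q x) {u v w : 𝒳 → 𝒳 → ℝ} {a b : ℝ}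
    (hu : MatchL2 M q u) (hv : MatchL2 M q v)
    (hle : ∀ x, ∀ x' ∈ M x, |w x x'| ≤ a * u x x' ^ 2 + b * v x x' ^ 2) :
    Summable fun x => q x * matchAvg M w x := by
  refine ((hu.mul_left a).add (hv.mul_left b)).of_norm_bounded fun x => ?_
  calc ‖q x * matchAvg M w x‖ = q x * |matchAvg M w x| := by
        rw [Real.norm_eq_abs, abs_mul, abs_of_nonneg (hq x)]
    _ ≤ q x * matchAvg M (fun x x' => a * u x x' ^ 2 + b * v x x' ^ 2) x :=
        mul_le_mul_of_nonneg_left ((abs_matchAvg_le w x).trans (matchAvg_mono (hle x))) (hq x)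
    _ = _ := by
        simp only [matchAvg, Finset.sum_add_distrib, ← Finset.mul_sum]
        ring

theorem add (hq : ∀ x, 0 ≤ q x) {u v : 𝒳 → 𝒳 → ℝ} (hu : MatchL2 M q u)
    (hv : MatchL2 M q v) : MatchL2 M q fun x x' => u x x' + v x x' :=
  hu.summable_of_abs_le hq hv (a := 2) (b := 2) fun x x' _ => by
    rw [abs_of_nonneg (sq_nonneg _)]
    nlinarith [sq_nonneg (u x x' - v x x')]

theorem const_mul (hq : ∀ x, 0 ≤ q x) {u : 𝒳 → 𝒳 → ℝ} (hu : MatchL2 M q u) (c : ℝ) :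
    MatchL2 M q fun x x' => c * u x x' :=
  hu.summable_of_abs_le hq hu (a := c ^ 2) (b := 0) fun x x' _ =>
    le_of_eq (by rw [abs_of_nonneg (sq_nonneg _)]; ring)

theorem sum (hq : ∀ x, 0 ≤ q x) {ι : Type*} (s : Finset ι) {u : ι → 𝒳 → 𝒳 → ℝ}
    (hu : ∀ j ∈ s, MatchL2 M q (u j)) : MatchL2 M q fun x x' => ∑ j ∈ s, u j x x' := by
  classical
  induction s using Finset.induction_on with
  | empty => simp [MatchL2, matchAvg]
  | insert j s hj ih =>
    simp only [Finset.sum_insert hj]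
    exact (hu j (Finset.mem_insert_self j s)).add hq
      (ih fun k hk => hu k (Finset.mem_insert_of_mem hk))

theorem dotProduct_add (hq : ∀ x, 0 ≤ q x) {ι : Type*} [Fintype ι] (θ : ι → ℝ)
    {T : 𝒳 → ι → ℝ} {B : 𝒳 → ℝ} (hT : ∀ j, MatchL2 M q fun x x' => T x' j - T x j)
    (hB : MatchL2 M q fun x x' => B x' - B x) :
    MatchL2 M q fun x x' => θ ⬝ᵥ (T x' - T x) + (B x' - B x) :=
  (MatchL2.sum hq Finset.univ fun j _ => (hT j).const_mul hq (θ j)).add hq hB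

theorem summable_mul_matchAvg_abs_mul (hq : ∀ x, 0 ≤ q x) {u v : 𝒳 → 𝒳 → ℝ}
    (hu : MatchL2 M q u) (hv : MatchL2 M q v) :
    Summable fun x => q x * matchAvg M (fun x x' => |u x x'| * |v x x'|) x :=
  hu.summable_of_abs_le hq hv (a := 1 / 2) (b := 1 / 2) fun x x' _ => by
    rw [abs_of_nonneg (by positivity)]
    nlinarith [sq_nonneg (|u x x'| - |v x x'|), sq_abs (u x x'), sq_abs (v x x')]

theorem summable_mul_abs_lrmLoss (hq : ∀ x, 0 ≤ q x) {ℓ r : 𝒳 → 𝒳 → ℝ}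
    (hℓ : MatchL2 M q ℓ) (hr : MatchL2 M q r) :
    Summable fun x => q x * |lrmLoss M ℓ r x| := by
  have h := hℓ.summable_of_abs_le hq hr (a := 2) (b := 1) (w := fun x x' =>
      ℓ x x' ^ 2 - 2 * ℓ x x' * r x x') fun x x' _ => by
    rw [abs_le]
    constructor <;> nlinarith [sq_nonneg (ℓ x x' - r x x'), sq_nonneg (ℓ x x' + r x x')]
  exact h.abs.congr fun x => by rw [abs_mul, abs_of_nonneg (hq x)]; rfl

end MatchL2

theorem tendsto_lrmLoss {ι : Type*} {l : Filter ι} {ℓ : 𝒳 → 𝒳 → ℝ} {r : ι → 𝒳 → 𝒳 → ℝ}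
    {r' : 𝒳 → 𝒳 → ℝ} {x : 𝒳} (h : ∀ x' ∈ M x, Tendsto (fun i => r i x x') l (𝓝 (r' x x'))) :
    Tendsto (fun i => lrmLoss M ℓ (r i) x) l (𝓝 (lrmLoss M ℓ r' x)) :=
  tendsto_matchAvg fun x' hx' => tendsto_const_nhds.sub ((h x' hx').const_mul _)

theorem abs_lrmLoss_sub_le {ℓ r r' w : 𝒳 → 𝒳 → ℝ} {K : ℝ} {x : 𝒳}
    (h : ∀ x' ∈ M x, |r x x' - r' x x'| ≤ K * w x x') :
    |lrmLoss M ℓ r x - lrmLoss M ℓ r' x| ≤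
      2 * K * matchAvg M (fun x x' => |ℓ x x'| * w x x') x := by
  have hdiff : lrmLoss M ℓ r x - lrmLoss M ℓ r' x =
      matchAvg M (fun x x' => 2 * (ℓ x x' * (r' x x' - r x x'))) x := by
    simp only [lrmLoss, matchAvg, ← mul_sub, ← Finset.sum_sub_distrib]
    congr 1
    exact Finset.sum_congr rfl fun _ _ => by ring
  have hscale : 2 * K * matchAvg M (fun x x' => |ℓ x x'| * w x x') x =
      matchAvg M (fun x x' => 2 * K * (|ℓ x x'| * w x x')) x := by
    simp only [matchAvg, ← Finset.mul_sum]
    ring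
  rw [hdiff, hscale]
  refine (abs_matchAvg_le _ x).trans (matchAvg_mono fun x' hx' => ?_)
  have := mul_le_mul_of_nonneg_left (h x' hx') (abs_nonneg (ℓ x x'))
  rw [abs_sub_comm] at this
  simp only [abs_mul, abs_two]
  linarith

end Matching

theorem rpow_le_mul_exp {s c t : ℝ} (hs : 0 < s) (hc : 0 < c) (ht : 0 ≤ t) :
    t ^ s ≤ (s / c) ^ s * Real.exp (c * t) := by
  have hst : 0 ≤ c * t / s := by positivity
  calc t ^ s = (s / c * (c * t / s)) ^ s := by
        congr 1
        field_simp
    _ = (s / c) ^ s * (c * t / s) ^ s := Real.mul_rpow (by positivity) hst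
    _ ≤ (s / c) ^ s * Real.exp (c * t / s) ^ s := by
        gcongr
        linarith [Real.add_one_le_exp (c * t / s)]
    _ = (s / c) ^ s * Real.exp (c * t) := by
        rw [← Real.exp_mul, div_mul_cancel₀ _ hs.ne']

theorem sq_one_add_rpow_le_mul_exp {γ c t : ℝ} (hγ : 0 < γ) (hc : 0 < c) (ht : 0 ≤ t) :
    (1 + t ^ γ) ^ 2 ≤ (1 + (γ / (c / 2)) ^ γ) ^ 2 * Real.exp (c * t) := by
  have hpow := rpow_le_mul_exp hγ (half_pos hc) ht
  have hexp : 1 ≤ Real.exp (c / 2 * t) := Real.one_le_exp (by positivity)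
  have hle : 1 + t ^ γ ≤ (1 + (γ / (c / 2)) ^ γ) * Real.exp (c / 2 * t) := by nlinarith
  calc (1 + t ^ γ) ^ 2 ≤ ((1 + (γ / (c / 2)) ^ γ) * Real.exp (c / 2 * t)) ^ 2 :=
        pow_le_pow_left₀ (by positivity) hle 2
    _ = (1 + (γ / (c / 2)) ^ γ) ^ 2 * Real.exp (c * t) := by
        rw [mul_pow, ← Real.exp_nat_mul]
        ring_nf

theorem MatchL2.one_add_rpow_of_summable_exp {𝒳 : Type*} {M : 𝒳 → Finset 𝒳} {q ρ : 𝒳 → ℝ}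
    (hq : ∀ x, 0 ≤ q x) (hρ : ∀ x, 0 ≤ ρ x) {γ c : ℝ} (hγ : 0 < γ) (hc : 0 < c)
    (hexp : Summable fun x => q x * Real.exp (c * ρ x)) :
    MatchL2 M q fun x _ => 1 + ρ x ^ γ := by
  refine .of_summable_sq hq <| (hexp.mul_left ((1 + (γ / (c / 2)) ^ γ) ^ 2)).of_nonneg_of_le
    (fun x => mul_nonneg (hq x) (sq_nonneg _)) fun x => ?_
  rw [mul_left_comm]
  exact mul_le_mul_of_nonneg_left (sq_one_add_rpow_le_mul_exp hγ hc (hρ x)) (hq x)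

section StrongLaw

variable {𝒳 Ω : Type*} [Countable 𝒳] [MeasurableSpace 𝒳] [MeasurableSingletonClass 𝒳]
  [MeasurableSpace Ω] {μ : Measure Ω} {q : 𝒳 → ℝ} {X : ℕ → Ω → 𝒳}

theorem ae_tendsto_empiricalMean (hq : ∀ x, 0 ≤ q x) (hX_meas : ∀ i, Measurable (X i))
    (hX_dist : ∀ i x, μ (X i ⁻¹' {x}) = ENNReal.ofReal (q x)) (hX_indep : iIndepFun X μ)
    {f : 𝒳 → ℝ} (hf : Summable fun x => q x * |f x|) :
    ∀ᵐ ω ∂μ, Tendsto (fun n => empiricalMean (X · ω) n f) atTop (𝓝 (∑' x, q x * f x)) := by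
  have hf_meas : Measurable f := measurable_of_countable f
  have hlaw : ∀ i x, μ.map (X i) {x} = ENNReal.ofReal (q x) := fun i x => by
    rw [Measure.map_apply (hX_meas i) (measurableSet_singleton x), hX_dist]
  have hident : ∀ i, IdentDistrib (X i) (X 0) μ μ := fun i =>
    ⟨(hX_meas i).aemeasurable, (hX_meas 0).aemeasurable,
      Measure.ext_of_singleton fun x => by rw [hlaw, hlaw]⟩
  have hint_law : Integrable f (μ.map (X 0)) := by
    refine ⟨hf_meas.aestronglyMeasurable, ?_⟩
    simp only [HasFiniteIntegral, lintegral_countable', hlaw, Real.enorm_eq_ofReal_abs,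
      ← ENNReal.ofReal_mul (abs_nonneg _)]
    rw [← ENNReal.ofReal_tsum_of_nonneg (fun x => mul_nonneg (abs_nonneg _) (hq x))
      (by simpa only [mul_comm] using hf)]
    exact ENNReal.ofReal_lt_top
  have hmean : ∫ ω, f (X 0 ω) ∂μ = ∑' x, q x * f x := by
    rw [← integral_map (hX_meas 0).aemeasurable hf_meas.aestronglyMeasurable,
      integral_countable hint_law]
    refine tsum_congr fun x => ?_
    rw [measureReal_def, hlaw, ENNReal.toReal_ofReal (hq x), smul_eq_mul]
  have hslln := strong_law_ae (μ := μ) (fun i ω => f (X i ω))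
    (hint_law.comp_measurable (hX_meas 0))
    (fun i j hij => (hX_indep.indepFun hij).comp hf_meas hf_meas)
    (fun i => (hident i).comp hf_meas)
  simpa only [hmean, smul_eq_mul, empiricalMean, one_div] using hslln

theorem ae_forall_pos_comp (hX_meas : ∀ i, Measurable (X i))
    (hX_dist : ∀ i x, μ (X i ⁻¹' {x}) = ENNReal.ofReal (q x)) :
    ∀ᵐ ω ∂μ, ∀ i, 0 < q (X i ω) := by
  rw [ae_all_iff]
  intro i
  refine ae_of_ae_map (p := fun x => 0 < q x) (hX_meas i).aemeasurable
    (ae_iff_of_countable.2 fun x hx => ?_)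
  rw [Measure.map_apply (hX_meas i) (measurableSet_singleton x), hX_dist] at hx
  exact ENNReal.ofReal_pos.1 (pos_iff_ne_zero.2 hx)

variable [DecidableEq 𝒳]

theorem ae_tendsto_empiricalMean_indicator (hq : ∀ x, 0 ≤ q x)
    (hX_meas : ∀ i, Measurable (X i))
    (hX_dist : ∀ i x, μ (X i ⁻¹' {x}) = ENNReal.ofReal (q x)) (hX_indep : iIndepFun X μ) :
    ∀ᵐ ω ∂μ, ∀ y, Tendsto (fun n => empiricalMean (X · ω) n (fun z => if z = y then 1 else 0))
      atTop (𝓝 (q y)) := by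
  rw [ae_all_iff]
  intro y
  have hsum : Summable fun x => q x * |if x = y then (1 : ℝ) else 0| :=
    summable_of_ne_finset_zero (s := {y}) fun x hx => by simp_all
  simpa using ae_tendsto_empiricalMean hq hX_meas hX_dist hX_indep hsum

theorem ae_tendsto_log_div_smoothed (hq : ∀ x, 0 ≤ q x) (hX_meas : ∀ i, Measurable (X i))
    (hX_dist : ∀ i x, μ (X i ⁻¹' {x}) = ENNReal.ofReal (q x)) (hX_indep : iIndepFun X μ)
    {a : 𝒳 → ℝ} {b : ℝ} {qhat : ℕ → Ω → 𝒳 → ℝ}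
    (hqhat : ∀ n ω x, qhat n ω x =
      ((∑ i ∈ Finset.range n, if X i ω = x then (1 : ℝ) else 0) + a x) / ((n : ℝ) + b)) :
    ∀ᵐ ω ∂μ, ∀ y y', 0 < q y → 0 < q y' →
      Tendsto (fun n => Real.log (qhat n ω y' / qhat n ω y)) atTop
        (𝓝 (Real.log (q y' / q y))) := by
  filter_upwards [ae_tendsto_empiricalMean_indicator hq hX_meas hX_dist hX_indep]
    with ω hfreq y y' hy hy'
  have hqhat_lim : ∀ z, Tendsto (fun n => qhat n ω z) atTop (𝓝 (q z)) := fun z => by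
    simpa only [hqhat] using tendsto_add_div_natCast_add (hfreq z) (a z) b
  exact (Real.continuousAt_log (div_pos hy' hy).ne').tendsto.comp
    ((hqhat_lim y').div (hqhat_lim y) hy.ne')

theorem ae_empiricalUnifIntegrable_of_dominated (hq : ∀ x, 0 ≤ q x)
    (hX_meas : ∀ i, Measurable (X i))
    (hX_dist : ∀ i x, μ (X i ⁻¹' {x}) = ENNReal.ofReal (q x)) (hX_indep : iIndepFun X μ)
    {φ : 𝒳 → ℝ} (hφ0 : ∀ x, 0 ≤ φ x) (hqφ : Summable fun x => q x * φ x)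
    {f : ℕ → Ω → 𝒳 → ℝ} {C : ℝ} (hdom : ∀ ω, ∀ᶠ n in atTop, ∀ y, |f n ω y| ≤ C * φ y) :
    ∀ᵐ ω ∂μ, EmpiricalUnifIntegrable (X · ω) (f · ω) := by
  have hqφ' : Summable fun x => q x * |φ x| := by simpa only [abs_of_nonneg (hφ0 _)] using hqφ
  filter_upwards [ae_tendsto_empiricalMean_indicator hq hX_meas hX_dist hX_indep,
    ae_tendsto_empiricalMean hq hX_meas hX_dist hX_indep hqφ'] with ω hfreq hφ
  exact empiricalUnifIntegrable_of_dominated hfreq hφ hqφ (hdom ω)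

variable {M : 𝒳 → Finset 𝒳}

theorem ae_empiricalUnifIntegrable_lrmLoss_sub (hq : ∀ x, 0 ≤ q x)
    (hX_meas : ∀ i, Measurable (X i))
    (hX_dist : ∀ i x, μ (X i ⁻¹' {x}) = ENNReal.ofReal (q x)) (hX_indep : iIndepFun X μ)
    {ℓ r₀ : 𝒳 → 𝒳 → ℝ} {r : ℕ → Ω → 𝒳 → 𝒳 → ℝ} (hℓ : MatchL2 M q ℓ)
    {ρ : 𝒳 → ℝ} (hρ : ∀ x, 0 ≤ ρ x) {c γ K₀ : ℝ} {K : ℕ → ℝ} (hc : 0 < c) (hγ : 0 < γ)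
    (hexp : Summable fun x => q x * Real.exp (c * ρ x))
    (hK : IsBoundedUnder (· ≤ ·) atTop K)
    (hr₀ : ∀ x, ∀ x' ∈ M x, |r₀ x x'| ≤ K₀ * (1 + ρ x ^ γ))
    (hr : ∀ n ω x, ∀ x' ∈ M x, |r n ω x x'| ≤ K n * (1 + ρ x ^ γ)) :
    ∀ᵐ ω ∂μ, EmpiricalUnifIntegrable (X · ω)
      fun n y => lrmLoss M ℓ (r n ω) y - lrmLoss M ℓ r₀ y := by
  obtain ⟨b, hb⟩ := hK
  have hw0 : ∀ x, 0 ≤ 1 + ρ x ^ γ := fun x => add_nonneg zero_le_one (Real.rpow_nonneg (hρ x) γ)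
  set φ : 𝒳 → ℝ := matchAvg M fun x x' => |ℓ x x'| * |1 + ρ x ^ γ|
  have hφ0 : ∀ x, 0 ≤ φ x := fun x => matchAvg_nonneg fun _ _ => by positivity
  refine ae_empiricalUnifIntegrable_of_dominated hq hX_meas hX_dist hX_indep hφ0
    (hℓ.summable_mul_matchAvg_abs_mul hq (.one_add_rpow_of_summable_exp hq hρ hγ hc hexp))
    (C := 2 * (b + K₀)) fun ω => ?_
  filter_upwards [eventually_map.1 hb] with n hn y
  calc _ ≤ 2 * (K n + K₀) * φ y :=
        abs_lrmLoss_sub_le fun x' hx' => (abs_sub _ _).trans <| by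
          rw [abs_of_nonneg (hw0 y), add_mul]
          exact add_le_add (hr n ω y x' hx') (hr₀ y x' hx')
    _ ≤ 2 * (b + K₀) * φ y := by gcongr; exact hφ0 y

theorem ae_tendsto_empiricalMean_lrmLoss (hq : ∀ x, 0 ≤ q x) (hX_meas : ∀ i, Measurable (X i))
    (hX_dist : ∀ i x, μ (X i ⁻¹' {x}) = ENNReal.ofReal (q x)) (hX_indep : iIndepFun X μ)
    {ℓ r₀ : 𝒳 → 𝒳 → ℝ} {r : ℕ → Ω → 𝒳 → 𝒳 → ℝ} (hℓ : MatchL2 M q ℓ) (hr₀ : MatchL2 M q r₀)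
    (hr : ∀ᵐ ω ∂μ, ∀ i, ∀ x' ∈ M (X i ω),
      Tendsto (fun n => r n ω (X i ω) x') atTop (𝓝 (r₀ (X i ω) x')))
    (hUI : ∀ᵐ ω ∂μ, EmpiricalUnifIntegrable (X · ω)
      fun n y => lrmLoss M ℓ (r n ω) y - lrmLoss M ℓ r₀ y) :
    ∀ᵐ ω ∂μ, Tendsto (fun n => empiricalMean (X · ω) n (lrmLoss M ℓ (r n ω))) atTop
      (𝓝 (∑' x, q x * lrmLoss M ℓ r₀ x)) := by
  filter_upwards [ae_tendsto_empiricalMean hq hX_meas hX_dist hX_indep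
      (hℓ.summable_mul_abs_lrmLoss hq hr₀),
    ae_tendsto_empiricalMean_indicator hq hX_meas hX_dist hX_indep, hr, hUI]
    with ω hmean hfreq hr_ω hUI_ω
  have herr := tendsto_empiricalMean_of_tendsto_zero hfreq (fun i => by
    simpa using (tendsto_lrmLoss (ℓ := ℓ) (hr_ω i)).sub_const (lrmLoss M ℓ r₀ (X i ω))) hUI_ω
  simpa [← empiricalMean_add] using hmean.add herr

end StrongLaw

theorem lrm_loss_pointwise_convergence_exponential_family_general
    {𝒳 : Type*} [Countable 𝒳] [DecidableEq 𝒳] [MeasurableSpace 𝒳] [MeasurableSingletonClass 𝒳]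
    {Ω : Type*} [MeasurableSpace Ω] (μ : Measure Ω)
    {d : ℕ} (Θ : Set (Fin d → ℝ))
    -- q0 is a PMF on 𝒳
    (q0 : 𝒳 → ℝ) (hq0_nonneg : ∀ x, 0 ≤ q0 x)
    -- matching set with M(x) ⊆ supp(q0) and |M(x)| = m < ∞
    (M : 𝒳 → Finset 𝒳)
    (hM_supp : ∀ x, ∀ x' ∈ M x, 0 < q0 x')
    -- q0 ∈ Q^adm_{q0}(𝒳)
    (hq0_adm : Summable fun x => q0 x * ∑ x' ∈ M x, (Real.log (q0 x' / q0 x)) ^ 2)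
    -- the exponential family model with natural parameter η(θ) = θ
    (T : 𝒳 → (Fin d → ℝ)) (B : 𝒳 → ℝ) (Z : (Fin d → ℝ) → ℝ)
    (pθ : (Fin d → ℝ) → 𝒳 → ℝ)
    (hmodel : ∀ θ ∈ Θ, ∀ x, pθ θ x = Real.exp (θ ⬝ᵥ T x + B x - Real.log (Z θ)))
    -- standing admissibility: ΔT_{i,j} ∈ L²(q0) and ΔB_j ∈ L²(q0)
    (hT_L2 : ∀ j, Summable fun x => q0 x * ∑ x' ∈ M x, (T x' j - T x j) ^ 2)
    (hB_L2 : Summable fun x => q0 x * ∑ x' ∈ M x, (B x' - B x) ^ 2)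
    -- i.i.d. observations from q0
    (X : ℕ → Ω → 𝒳)
    (hX_meas : ∀ i, Measurable (X i))
    (hX_dist : ∀ i x, μ (X i ⁻¹' {x}) = ENNReal.ofReal (q0 x))
    (hX_indep : iIndepFun X μ)
    -- the Laplace-smoothed estimator q̂_α with α > 0
    (α : ℝ)
    (qdag : 𝒳 → ℝ)
    (Zdag : ℝ)
    (qhat : ℕ → Ω → 𝒳 → ℝ)
    (hqhat : ∀ n ω x, qhat n ω x =
      ((∑ i ∈ Finset.range n, if X i ω = x then (1 : ℝ) else 0) + α * qdag x)
        / ((n : ℝ) + α * Zdag))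
    -- Assumption A2
    (nrmX : 𝒳 → ℝ) (hnrmX : ∀ x, 0 ≤ nrmX x)
    (hA2 : Finite 𝒳 ∨
      (Infinite 𝒳 ∧ (∃ c > (0 : ℝ), Summable fun x => q0 x * Real.exp (c * nrmX x)) ∧
        ∃ Kq0 > (0 : ℝ), ∃ γ > (1 : ℝ), ∃ Khat : ℕ → ℝ,
          (∀ n, 0 ≤ Khat n) ∧ IsBoundedUnder (· ≤ ·) atTop Khat ∧
          (∀ x, ∀ x' ∈ M x, |Real.log (q0 x' / q0 x)| ≤ Kq0 * (1 + nrmX x ^ γ)) ∧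
          (∀ n ω x, ∀ x' ∈ M x,
            |Real.log (qhat n ω x' / qhat n ω x)| ≤ Khat n * (1 + nrmX x ^ γ))))
    -- the population and empirical LRM losses
    (Lpop : (Fin d → ℝ) → ℝ)
    (hLpop : ∀ θ, Lpop θ = ∑' x, q0 x * ((1 / ((M x).card : ℝ)) *
      ∑ x' ∈ M x, ((Real.log (pθ θ x' / pθ θ x)) ^ 2
        - 2 * Real.log (pθ θ x' / pθ θ x) * Real.log (q0 x' / q0 x))))
    (Lhat : ℕ → Ω → (Fin d → ℝ) → ℝ)
    (hLhat : ∀ n ω θ, Lhat n ω θ = (1 / (n : ℝ)) * ∑ i ∈ Finset.range n,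
      ((1 / ((M (X i ω)).card : ℝ)) * ∑ x' ∈ M (X i ω),
        ((Real.log (pθ θ x' / pθ θ (X i ω))) ^ 2
          - 2 * Real.log (pθ θ x' / pθ θ (X i ω))
              * Real.log (qhat n ω x' / qhat n ω (X i ω)))))
    -- E ⊆ Θ is open and bounded
    (E : Set (Fin d → ℝ)) (hE_sub : E ⊆ Θ) :
    -- conclusion: almost-sure pointwise convergence on E
    ∀ θ ∈ E, ∀ᵐ ω ∂μ, Tendsto (fun n => Lhat n ω θ) atTop (𝓝 (Lpop θ)) := by
  intro θ hθ
  set ℓ : 𝒳 → 𝒳 → ℝ := fun x x' => θ ⬝ᵥ (T x' - T x) + (B x' - B x)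
  set r₀ : 𝒳 → 𝒳 → ℝ := fun x x' => Real.log (q0 x' / q0 x)
  set r : ℕ → Ω → 𝒳 → 𝒳 → ℝ := fun n ω x x' => Real.log (qhat n ω x' / qhat n ω x)
  have hlog : ∀ x x', Real.log (pθ θ x' / pθ θ x) = ℓ x x' := fun x x' => by
    rw [hmodel θ (hE_sub hθ), hmodel θ (hE_sub hθ), ← Real.exp_sub, Real.log_exp]
    simp only [ℓ, dotProduct_sub]
    ring
  have hℓ : MatchL2 M q0 ℓ := .dotProduct_add hq0_nonneg θ
    (fun j => .of_summable_sum hq0_nonneg (hT_L2 j)) (.of_summable_sum hq0_nonneg hB_L2)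
  have hr : ∀ᵐ ω ∂μ, ∀ i, ∀ x' ∈ M (X i ω),
      Tendsto (fun n => r n ω (X i ω) x') atTop (𝓝 (r₀ (X i ω) x')) := by
    filter_upwards [ae_tendsto_log_div_smoothed hq0_nonneg hX_meas hX_dist hX_indep hqhat,
      ae_forall_pos_comp hX_meas hX_dist] with ω hlim hpos i x' hx'
    exact hlim _ _ (hpos i) (hM_supp _ x' hx')
  have hUI : ∀ᵐ ω ∂μ, EmpiricalUnifIntegrable (X · ω)
      fun n y => lrmLoss M ℓ (r n ω) y - lrmLoss M ℓ r₀ y := by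
    rcases hA2 with hfin | ⟨-, ⟨c, hc, hexp⟩, Kq0, -, γ, hγ, Khat, -, hKhat, hq0_bd, hqhat_bd⟩
    · exact ae_of_all _ fun ω => empiricalUnifIntegrable_of_finite
    · exact ae_empiricalUnifIntegrable_lrmLoss_sub hq0_nonneg hX_meas hX_dist hX_indep hℓ hnrmX
        hc (by linarith) hexp hKhat hq0_bd hqhat_bd
  filter_upwards [ae_tendsto_empiricalMean_lrmLoss hq0_nonneg hX_meas hX_dist hX_indep hℓ
    (.of_summable_sum hq0_nonneg hq0_adm) hr hUI] with ω hω
  simp only [hLhat, hLpop, hlog]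
  exact hω

/-- Pointwise almost-sure convergence of the empirical LRM loss for
exponential family models with natural parameter `η(θ) = θ`. Under Assumption A2 and the
standing admissibility conditions (each `ΔT_{i,j}` and `ΔB_j` in `L²(q0)`), for every open
bounded `E ⊆ Θ` and every `θ ∈ E`, `L̂_n(θ) → L(θ)` almost surely. -/
theorem lrm_loss_pointwise_convergence_exponential_family
    {𝒳 : Type*} [Countable 𝒳] [DecidableEq 𝒳] [MeasurableSpace 𝒳] [MeasurableSingletonClass 𝒳]
    {Ω : Type*} [MeasurableSpace Ω] (μ : Measure Ω) [IsProbabilityMeasure μ]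
    {d : ℕ} (Θ : Set (Fin d → ℝ))
    -- q0 is a PMF on 𝒳
    (q0 : 𝒳 → ℝ) (hq0_nonneg : ∀ x, 0 ≤ q0 x) (hq0_sum : ∑' x, q0 x = 1)
    -- matching set with M(x) ⊆ supp(q0) and |M(x)| = m < ∞
    (M : 𝒳 → Finset 𝒳) (m : ℕ) (hm : 0 < m) (hM_card : ∀ x, (M x).card = m)
    (hM_supp : ∀ x, ∀ x' ∈ M x, 0 < q0 x')
    -- q0 ∈ Q^adm_{q0}(𝒳)
    (hq0_adm : Summable fun x => q0 x * ∑ x' ∈ M x, (Real.log (q0 x' / q0 x)) ^ 2)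
    -- the exponential family model with natural parameter η(θ) = θ
    (T : 𝒳 → (Fin d → ℝ)) (B : 𝒳 → ℝ) (Z : (Fin d → ℝ) → ℝ) (hZ : ∀ θ ∈ Θ, 0 < Z θ)
    (pθ : (Fin d → ℝ) → 𝒳 → ℝ)
    (hmodel : ∀ θ ∈ Θ, ∀ x, pθ θ x = Real.exp (θ ⬝ᵥ T x + B x - Real.log (Z θ)))
    -- standing admissibility: ΔT_{i,j} ∈ L²(q0) and ΔB_j ∈ L²(q0)
    (hT_L2 : ∀ j, Summable fun x => q0 x * ∑ x' ∈ M x, (T x' j - T x j) ^ 2)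
    (hB_L2 : Summable fun x => q0 x * ∑ x' ∈ M x, (B x' - B x) ^ 2)
    -- i.i.d. observations from q0
    (X : ℕ → Ω → 𝒳)
    (hX_meas : ∀ i, Measurable (X i))
    (hX_dist : ∀ i x, μ (X i ⁻¹' {x}) = ENNReal.ofReal (q0 x))
    (hX_indep : iIndepFun X μ)
    -- the Laplace-smoothed estimator q̂_α with α > 0
    (α : ℝ) (hα : 0 < α)
    (qdag : 𝒳 → ℝ) (hqdag_nonneg : ∀ x, 0 ≤ qdag x) (hqdag_pos : ∀ x, 0 < q0 x → 0 < qdag x)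
    (Zdag : ℝ) (hZdag : HasSum qdag Zdag)
    (qhat : ℕ → Ω → 𝒳 → ℝ)
    (hqhat : ∀ n ω x, qhat n ω x =
      ((∑ i ∈ Finset.range n, if X i ω = x then (1 : ℝ) else 0) + α * qdag x)
        / ((n : ℝ) + α * Zdag))
    -- q̂_α ∈ Q^adm_{q0}(𝒳) almost surely
    (hqhat_adm : ∀ n, ∀ᵐ ω ∂μ,
      Summable fun x => q0 x * ∑ x' ∈ M x, (Real.log (qhat n ω x' / qhat n ω x)) ^ 2)
    -- Assumption A2
    (nrmX : 𝒳 → ℝ) (hnrmX : ∀ x, 0 ≤ nrmX x)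
    (hA2 : Finite 𝒳 ∨
      (Infinite 𝒳 ∧ (∃ c > (0 : ℝ), Summable fun x => q0 x * Real.exp (c * nrmX x)) ∧
        ∃ Kq0 > (0 : ℝ), ∃ γ > (1 : ℝ), ∃ Khat : ℕ → ℝ,
          (∀ n, 0 ≤ Khat n) ∧ IsBoundedUnder (· ≤ ·) atTop Khat ∧
          (∀ x, ∀ x' ∈ M x, |Real.log (q0 x' / q0 x)| ≤ Kq0 * (1 + nrmX x ^ γ)) ∧
          (∀ n ω x, ∀ x' ∈ M x,
            |Real.log (qhat n ω x' / qhat n ω x)| ≤ Khat n * (1 + nrmX x ^ γ))))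
    -- the population and empirical LRM losses
    (Lpop : (Fin d → ℝ) → ℝ)
    (hLpop : ∀ θ, Lpop θ = ∑' x, q0 x * ((1 / ((M x).card : ℝ)) *
      ∑ x' ∈ M x, ((Real.log (pθ θ x' / pθ θ x)) ^ 2
        - 2 * Real.log (pθ θ x' / pθ θ x) * Real.log (q0 x' / q0 x))))
    (Lhat : ℕ → Ω → (Fin d → ℝ) → ℝ)
    (hLhat : ∀ n ω θ, Lhat n ω θ = (1 / (n : ℝ)) * ∑ i ∈ Finset.range n,
      ((1 / ((M (X i ω)).card : ℝ)) * ∑ x' ∈ M (X i ω),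
        ((Real.log (pθ θ x' / pθ θ (X i ω))) ^ 2
          - 2 * Real.log (pθ θ x' / pθ θ (X i ω))
              * Real.log (qhat n ω x' / qhat n ω (X i ω)))))
    -- E ⊆ Θ is open and bounded
    (E : Set (Fin d → ℝ)) (hE_sub : E ⊆ Θ) (hE_open : IsOpen E)
    (hE_bounded : Bornology.IsBounded E) :
    -- conclusion: almost-sure pointwise convergence on E
    ∀ θ ∈ E, ∀ᵐ ω ∂μ, Tendsto (fun n => Lhat n ω θ) atTop (𝓝 (Lpop θ)) :=
  lrm_loss_pointwise_convergence_exponential_family_general μ Θ q0 hq0_nonneg M hM_supp hq0_adm T B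
    Z pθ hmodel hT_L2 hB_L2 X hX_meas hX_dist hX_indep α qdag Zdag qhat hqhat nrmX hnrmX hA2 Lpop
    hLpop Lhat hLhat E hE_sub
end

section
/- Let 𝒳 = S^d be the set of configurations of a lattice with d sites and finite state set S, let the matching set be M(x) := {x' : x'_{−k} = x_{−k} and x'_k = s for some s ∈ S \ {x_k}, k = 1,…,d} (so |M(x)| = d(|S|−1)), and suppose q0 satisfies the Markov property q0(x_k | x_{−k}) = q0(x_k | nb(x_k)) for every site k, and stationarity (the conditional distribution of a site's state given its neighbourhood is the same at every site). Suppose the model p_θ is a Markov random field with the same neighbourhood structure, so that for x' ∈ M(x) differing from x only at site k, log(p_θ(x')/p_θ(x)) depends only on (x'_k, x_k, nb(x_k)) and equals log(p_θ(x'_k | nb(x_k))/p_θ(x_k | nb(x_k))). Then the population LRM loss reduces to a single-site expectation: L(θ) = E_{(x, nb(x))∼q0}[(1/(|S|−1)) Σ_{x'∈S, x'≠x} (log(p_θ(x' | nb(x))/p_θ(x | nb(x))))² − 2 log(p_θ(x' | nb(x))/p_θ(x | nb(x))) log(q0(x' | nb(x))/q0(x | nb(x)))], where (x, nb(x)) denotes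 the state and neighbourhood of a single site. -/
/-!
Changing the state of site `k` multiplies both `p_θ` and `q0` by ratios that depend only on the
pair (state of `k`, states of the neighbours of `k`). So for each site the inner LRM sum is a
function of that pair, and its `q0`-expectation is an expectation under the pair's marginal,
which by stationarity is the same `r` at every site. Averaging `d` equal terms gives the result.
-/

open Finset

theorem sum_mul_comp_eq_sum_sum_marginal {α β γ R : Type*} [Fintype α] [Fintype β] [Fintype γ]
    [DecidableEq β] [DecidableEq γ] [CommSemiring R]
    (q : α → R) (f : α → β) (h : α → γ) (g : β → γ → R) :
    ∑ x, q x * g (f x) (h x)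
      = ∑ b, ∑ c, (∑ x, if f x = b ∧ h x = c then q x else 0) * g b c := by
  simp_rw [sum_mul, ite_mul, zero_mul, ← Prod.mk.injEq]
  rw [← Fintype.sum_prod_type', sum_comm]
  simp

theorem sum_mul_average_eq_of_forall_sum_mul_eq {α ι : Type*} [Fintype α] [Fintype ι]
    [Nonempty ι] (q : α → ℝ) (F : ι → α → ℝ) (a E : ℝ) (hF : ∀ k, ∑ x, q x * F k x = E) :
    ∑ x, q x * (1 / (Fintype.card ι * a) * ∑ k, F k x) = 1 / a * E := by
  have hcard : (Fintype.card ι : ℝ) ≠ 0 := Nat.cast_ne_zero.mpr Fintype.card_ne_zero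
  calc ∑ x, q x * (1 / (Fintype.card ι * a) * ∑ k, F k x)
      = 1 / (Fintype.card ι * a) * ∑ k, ∑ x, q x * F k x := by
        simp_rw [mul_left_comm (q _), mul_sum]
        exact sum_comm
    _ = 1 / a * E := by
        simp only [hF, sum_const, card_univ, nsmul_eq_mul]
        rw [one_div, one_div, mul_inv, mul_comm (Fintype.card ι : ℝ)⁻¹, mul_assoc,
          inv_mul_cancel_left₀ hcard]

noncomputable def singleSiteLrmSum {S V : Type*} [Fintype S] [DecidableEq S]
    (P Q : S → V → ℝ) (s : S) (v : V) : ℝ :=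
  ∑ s' ∈ univ.erase s,
    (Real.log (P s' v / P s v) ^ 2 - 2 * Real.log (P s' v / P s v) * Real.log (Q s' v / Q s v))

theorem lrm_loss_single_site_reduction_general
    {S : Type*} [Fintype S] [DecidableEq S] {d c : ℕ} (hd : 0 < d)
    {Θ : Type*}
    -- each site k has c neighbours, nb k 0, …, nb k (c-1), none equal to k itself
    (nb : Fin d → Fin c → Fin d)
    -- the data-generating PMF q0, strictly positive
    (q0 : (Fin d → S) → ℝ)
    -- the model family, strictly positive
    (pθ : Θ → (Fin d → S) → ℝ)
    -- single-site conditional distributions of the model and of q0, both positive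
    (Pcond : Θ → S → (Fin c → S) → ℝ)
    (Q : S → (Fin c → S) → ℝ)
    -- the model is a Markov random field: its single-site ratios depend only on the
    -- site's state and its neighbourhood, through the conditional Pcond
    (hmodel : ∀ θ (x : Fin d → S) (k : Fin d) (s : S),
      pθ θ (Function.update x k s) / pθ θ x
        = Pcond θ s (fun j => x (nb k j)) / Pcond θ (x k) (fun j => x (nb k j)))
    -- q0 satisfies the Markov property: its single-site ratios depend only on the
    -- site's state and its neighbourhood, through the conditional Q
    (hq0_markov : ∀ (x : Fin d → S) (k : Fin d) (s : S),
      q0 (Function.update x k s) / q0 x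
        = Q s (fun j => x (nb k j)) / Q (x k) (fun j => x (nb k j)))
    -- stationarity: the joint distribution of a site's state and its neighbourhood states
    -- is the same at every site, with common PMF r
    (r : S → (Fin c → S) → ℝ)
    (hstat : ∀ (k : Fin d) (s : S) (v : Fin c → S),
      (∑ x : Fin d → S, if x k = s ∧ (fun j => x (nb k j)) = v then q0 x else 0) = r s v)
    -- the population LRM loss for the single-site-flip matching set,
    -- with |M(x)| = d(|S|−1)
    (L : Θ → ℝ)
    (hL : ∀ θ, L θ = ∑ x : Fin d → S, q0 x *
      ((1 / ((d : ℝ) * ((Fintype.card S : ℝ) - 1))) *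
        ∑ k : Fin d, ∑ s ∈ Finset.univ.erase (x k),
          ((Real.log (pθ θ (Function.update x k s) / pθ θ x)) ^ 2
            - 2 * Real.log (pθ θ (Function.update x k s) / pθ θ x)
                * Real.log (q0 (Function.update x k s) / q0 x)))) :
    -- conclusion: the loss reduces to a single-site expectation
    ∀ θ, L θ = ∑ s : S, ∑ v : Fin c → S, r s v *
      ((1 / ((Fintype.card S : ℝ) - 1)) *
        ∑ s' ∈ Finset.univ.erase s,
          ((Real.log (Pcond θ s' v / Pcond θ s v)) ^ 2
            - 2 * Real.log (Pcond θ s' v / Pcond θ s v)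
                * Real.log (Q s' v / Q s v))) := by
  intro θ
  have : Nonempty (Fin d) := ⟨⟨0, hd⟩⟩
  have hmarginal : ∀ k, ∑ x, q0 x * singleSiteLrmSum (Pcond θ) Q (x k) (fun j => x (nb k j))
      = ∑ s, ∑ v, r s v * singleSiteLrmSum (Pcond θ) Q s v := fun k => by
    rw [sum_mul_comp_eq_sum_sum_marginal q0 (· k) (fun x j => x (nb k j))]
    simp only [hstat]
  have haverage := sum_mul_average_eq_of_forall_sum_mul_eq q0 _ ((Fintype.card S : ℝ) - 1) _
    hmarginal
  rw [Fintype.card_fin] at haverage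
  rw [hL]
  simp only [hmodel, hq0_markov]
  -- the rewritten inner sums are `singleSiteLrmSum` at `(x k, x ∘ nb k)` by definition
  refine haverage.trans ?_
  simp only [mul_sum, mul_left_comm (1 / _ : ℝ), singleSiteLrmSum]

/-- For a Markov random field on a lattice with `d` sites, finite state
space `S`, matching set given by all single-site state changes, a data-generating PMF `q0`
satisfying the Markov property and stationarity, and a model `p_θ` whose single-site
log-ratios depend only on the site's state and its neighbourhood, the population LRM loss
reduces to a single-site expectation. -/
theorem lrm_loss_single_site_reduction
    {S : Type*} [Fintype S] [DecidableEq S] {d c : ℕ} (hd : 0 < d) (hS : 2 ≤ Fintype.card S)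
    {Θ : Type*}
    -- each site k has c neighbours, nb k 0, …, nb k (c-1), none equal to k itself
    (nb : Fin d → Fin c → Fin d) (hnb : ∀ k j, nb k j ≠ k)
    -- the data-generating PMF q0, strictly positive
    (q0 : (Fin d → S) → ℝ) (hq0_pos : ∀ x, 0 < q0 x) (hq0_sum : ∑ x : Fin d → S, q0 x = 1)
    -- the model family, strictly positive
    (pθ : Θ → (Fin d → S) → ℝ) (hpθ_pos : ∀ θ x, 0 < pθ θ x)
    -- single-site conditional distributions of the model and of q0, both positive
    (Pcond : Θ → S → (Fin c → S) → ℝ) (hPcond_pos : ∀ θ s v, 0 < Pcond θ s v)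
    (Q : S → (Fin c → S) → ℝ) (hQ_pos : ∀ s v, 0 < Q s v)
    -- the model is a Markov random field: its single-site ratios depend only on the
    -- site's state and its neighbourhood, through the conditional Pcond
    (hmodel : ∀ θ (x : Fin d → S) (k : Fin d) (s : S),
      pθ θ (Function.update x k s) / pθ θ x
        = Pcond θ s (fun j => x (nb k j)) / Pcond θ (x k) (fun j => x (nb k j)))
    -- q0 satisfies the Markov property: its single-site ratios depend only on the
    -- site's state and its neighbourhood, through the conditional Q
    (hq0_markov : ∀ (x : Fin d → S) (k : Fin d) (s : S),
      q0 (Function.update x k s) / q0 x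
        = Q s (fun j => x (nb k j)) / Q (x k) (fun j => x (nb k j)))
    -- stationarity: the joint distribution of a site's state and its neighbourhood states
    -- is the same at every site, with common PMF r
    (r : S → (Fin c → S) → ℝ)
    (hstat : ∀ (k : Fin d) (s : S) (v : Fin c → S),
      (∑ x : Fin d → S, if x k = s ∧ (fun j => x (nb k j)) = v then q0 x else 0) = r s v)
    -- the population LRM loss for the single-site-flip matching set,
    -- with |M(x)| = d(|S|−1)
    (L : Θ → ℝ)
    (hL : ∀ θ, L θ = ∑ x : Fin d → S, q0 x *
      ((1 / ((d : ℝ) * ((Fintype.card S : ℝ) - 1))) *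
        ∑ k : Fin d, ∑ s ∈ Finset.univ.erase (x k),
          ((Real.log (pθ θ (Function.update x k s) / pθ θ x)) ^ 2
            - 2 * Real.log (pθ θ (Function.update x k s) / pθ θ x)
                * Real.log (q0 (Function.update x k s) / q0 x)))) :
    -- conclusion: the loss reduces to a single-site expectation
    ∀ θ, L θ = ∑ s : S, ∑ v : Fin c → S, r s v *
      ((1 / ((Fintype.card S : ℝ) - 1)) *
        ∑ s' ∈ Finset.univ.erase s,
          ((Real.log (Pcond θ s' v / Pcond θ s v)) ^ 2
            - 2 * Real.log (Pcond θ s' v / Pcond θ s v)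
                * Real.log (Q s' v / Q s v))) :=
  lrm_loss_single_site_reduction_general hd nb q0 pθ Pcond Q hmodel hq0_markov r hstat L hL
end
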